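/- A unitary operator on a separable Hilbert space whose spectrum is countable has a complete orthonormal basis of eigenvectors (pure point spectrum). -/

import Mathlib

/-!
Let `M` be the span of the eigenvectors of a normal operator `T`. Since `T` and `T†` commute,
both preserve every eigenspace of `T`, so `Mᗮ` is invariant under `T` and `T†`; the restriction
of `T` to `Mᗮ` is therefore normal, with spectrum contained in `σ(T)`. A nonempty countable compact
subset of `ℂ` has an isolated point (Baire), and at an isolated point `l` of the spectrum of a
normal operator the functional calculus applied to the indicator of `{l}` is a nonzero operator
whose range consists of `l`-eigenvectors. Hence if `Mᗮ ≠ 0` it would contain an eigenvector of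
`T`, which is absurd. Unitary operators are normal.
-/

open Set Module End ContinuousLinearMap

theorem exists_isOpen_singleton_of_countable {X : Type*} [TopologicalSpace X] [BaireSpace X]
    [T1Space X] [Countable X] [Nonempty X] : ∃ x : X, IsOpen ({x} : Set X) := by
  obtain ⟨x, hx⟩ := nonempty_interior_of_iUnion_of_closed (fun x : X ↦ isClosed_singleton)
    (iUnion_singleton_eq_range id ▸ range_id)
  exact ⟨x, hx.subset_singleton_iff.mp interior_subset ▸ isOpen_interior⟩

theorem IsStarNormal.exists_ne_zero_mul_eq_smul_of_isOpen_singleton {A : Type*} [Ring A]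
    [StarRing A] [TopologicalSpace A] [Algebra ℂ A] [ContinuousFunctionalCalculus ℂ A IsStarNormal]
    {a : A} [IsStarNormal a] {l : spectrum ℂ a} (hl : IsOpen {l}) :
    ∃ p : A, p ≠ 0 ∧ a * p = (l : ℂ) • p := by
  classical
  set f : ℂ → ℂ := fun z ↦ if z = l then 1 else 0
  have hf : ContinuousOn f (spectrum ℂ a) := by
    rw [continuousOn_iff_continuous_domRestrict]
    have : (spectrum ℂ a).domRestrict f = ({l} : Set (spectrum ℂ a)).indicator 1 := by
      ext z
      simp [f, Set.indicator, Subtype.ext_iff]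
    rw [this]
    exact IsClopen.continuous_indicator ⟨isClosed_singleton, hl⟩ continuous_const
  refine ⟨cfc f a, fun h0 ↦ ?_, ?_⟩
  · simpa [f] using (eqOn_of_cfc_eq_cfc (h0.trans (cfc_zero ℂ a).symm) hf) l.2
  · calc a * cfc f a = cfc (fun z ↦ z * f z) a := by rw [cfc_mul _ _ a, cfc_id' ℂ a]
      _ = cfc (fun z ↦ l * f z) a := cfc_congr fun z _ ↦ by by_cases hz : z = l <;> simp [f, hz]
      _ = (l : ℂ) • cfc f a := cfc_const_mul _ _ a

theorem Module.End.mapsTo_iSup_eigenspace_of_comm {R M : Type*} [CommRing R] [AddCommGroup M]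
    [Module R M] {f g : End R M} (h : Commute f g) :
    MapsTo g (⨆ μ, f.eigenspace μ : Submodule R M) (⨆ μ, f.eigenspace μ : Submodule R M) := by
  have : (⨆ μ, f.eigenspace μ) ≤ (⨆ μ, f.eigenspace μ).comap g :=
    iSup_le fun μ _ hy ↦ Submodule.mem_iSup_of_mem μ (mapsTo_genEigenspace_of_comm h μ 1 hy)
  exact fun _ hx ↦ this hx

section Restrict

variable {𝕜 E : Type*} [RCLike 𝕜] [NormedAddCommGroup E] [InnerProductSpace 𝕜 E] [CompleteSpace E]
  {K : Submodule 𝕜 E} {T : E →L[𝕜] E}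

theorem Submodule.mapsTo_orthogonal_of_mapsTo_adjoint (h : MapsTo (adjoint T) K K) :
    MapsTo T Kᗮ Kᗮ := by
  intro x hx y hy
  rw [← adjoint_inner_left]
  exact hx _ (h hy)

theorem Submodule.commute_starProjection_of_mapsTo [K.HasOrthogonalProjection]
    (hT : MapsTo T K K) (hT' : MapsTo (adjoint T) K K) : Commute K.starProjection T := by
  have hP := K.isIdempotentElem_starProjection.toLinearMap
  have := (LinearMap.IsIdempotentElem.commute_iff (T := (T : E →ₗ[𝕜] E)) hP).mpr ⟨?_, ?_⟩
  · exact coe_injective (by simpa only [toLinearMap_mul] using this.eq)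
  · rw [range_starProjection, mem_invtSubmodule_iff_forall_mem_of_mem]
    exact hT
  · rw [ker_starProjection, mem_invtSubmodule_iff_forall_mem_of_mem]
    exact mapsTo_orthogonal_of_mapsTo_adjoint hT'

theorem ContinuousLinearMap.adjoint_restrict [CompleteSpace K] (hT : MapsTo T K K)
    (hT' : MapsTo (adjoint T) K K) : adjoint (T.restrict hT) = (adjoint T).restrict hT' := by
  refine ((eq_adjoint_iff _ _).mpr fun x y ↦ ?_).symm
  exact adjoint_inner_left T (y : E) x

theorem IsStarNormal.restrict [CompleteSpace K] [IsStarNormal T] (hT : MapsTo T K K)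
    (hT' : MapsTo (adjoint T) K K) : IsStarNormal (T.restrict hT) := by
  rw [isStarNormal_iff, Commute, SemiconjBy, star_eq_adjoint, adjoint_restrict hT hT']
  ext x
  exact congr($(star_comm_self' T) (x : E))

theorem ContinuousLinearMap.spectrum_restrict_subset [K.HasOrthogonalProjection]
    (hT : MapsTo T K K) (hT' : MapsTo (adjoint T) K K) :
    spectrum 𝕜 (T.restrict hT) ⊆ spectrum 𝕜 T := by
  intro μ
  contrapose
  rw [spectrum.notMem_iff, spectrum.notMem_iff]
  rintro ⟨u, hu⟩
  -- `(μ - T)⁻¹` commutes with the projection onto `K`, hence preserves `K`.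
  have hPu : Commute K.starProjection ↑u⁻¹ := by
    refine Commute.units_inv_right ?_
    rw [hu]
    exact (Algebra.commute_algebraMap_right μ _).sub_right
      (K.commute_starProjection_of_mapsTo hT hT')
  have hK : MapsTo (↑u⁻¹ : E →L[𝕜] E) K K := fun x hx ↦ by
    have h := congr($(hPu.eq) x)
    rw [mul_apply_eq_comp, mul_apply_eq_comp, K.starProjection_eq_self_iff.mpr hx] at h
    exact h ▸ K.starProjection_apply_mem _
  refine ⟨⟨_, (↑u⁻¹ : E →L[𝕜] E).restrict hK, ?_, ?_⟩, rfl⟩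
  · ext x
    have h := congr($(u.mul_inv) (x : E))
    rw [hu] at h
    simp [Algebra.algebraMap_eq_smul_one] at h ⊢
    exact h
  · ext x
    have h := congr($(u.inv_mul) (x : E))
    rw [hu] at h
    simp [Algebra.algebraMap_eq_smul_one] at h ⊢
    exact h

end Restrict

section Normal

variable {H : Type*} [NormedAddCommGroup H] [InnerProductSpace ℂ H] [CompleteSpace H]
  {T : H →L[ℂ] H} [IsStarNormal T]

theorem IsStarNormal.hasEigenvalue_of_isOpen_singleton {l : spectrum ℂ T} (hl : IsOpen {l}) :
    HasEigenvalue (T : End ℂ H) l := by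
  obtain ⟨P, hP, hTP⟩ := IsStarNormal.exists_ne_zero_mul_eq_smul_of_isOpen_singleton hl
  obtain ⟨x, hx⟩ : ∃ x, P x ≠ 0 := by
    by_contra! h
    exact hP (ext h)
  exact hasEigenvalue_of_hasEigenvector ⟨mem_eigenspace_iff.mpr congr($hTP x), hx⟩

theorem IsStarNormal.exists_hasEigenvalue_of_countable_spectrum [Nontrivial H]
    (h : (spectrum ℂ T).Countable) : ∃ μ, HasEigenvalue (T : End ℂ H) μ := by
  have : Countable (spectrum ℂ T) := h.to_subtype
  have : Nonempty (spectrum ℂ T) := (spectrum.nonempty T).to_subtype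
  have : CompleteSpace (spectrum ℂ T) := (spectrum.isClosed T).completeSpace_coe
  obtain ⟨l, hl⟩ := exists_isOpen_singleton_of_countable (X := spectrum ℂ T)
  exact ⟨l, hasEigenvalue_of_isOpen_singleton hl⟩

theorem IsStarNormal.topologicalClosure_iSup_eigenspace_eq_top (h : (spectrum ℂ T).Countable) :
    (⨆ μ, eigenspace (T : End ℂ H) μ).topologicalClosure = ⊤ := by
  set M := ⨆ μ, eigenspace (T : End ℂ H) μ
  have hT : MapsTo T Mᗮ Mᗮ := M.mapsTo_orthogonal_of_mapsTo_adjoint <|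
    mapsTo_iSup_eigenspace_of_comm <| (star_comm_self (x := T)).symm.map toLinearMapRingHom
  have hT' : MapsTo (adjoint T) Mᗮ Mᗮ := M.mapsTo_orthogonal_of_mapsTo_adjoint <| by
    rw [adjoint_adjoint]
    exact mapsTo_iSup_eigenspace_of_comm (Commute.refl _)
  rw [Submodule.topologicalClosure_eq_top_iff]
  by_contra hM
  have : Nontrivial Mᗮ := Submodule.nontrivial_iff_ne_bot.mpr hM
  have : IsStarNormal (T.restrict hT) := IsStarNormal.restrict hT hT'
  obtain ⟨μ, hμ⟩ := exists_hasEigenvalue_of_countable_spectrum (T := T.restrict hT)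
    (h.mono (spectrum_restrict_subset hT hT'))
  obtain ⟨x, hx, hx0⟩ := hμ.exists_hasEigenvector
  have hxM : (x : H) ∈ M := Submodule.mem_iSup_of_mem μ
    (mem_eigenspace_iff.mpr congr(Subtype.val $(mem_eigenspace_iff.mp hx)))
  exact hx0 (Subtype.ext ((Submodule.orthogonal_disjoint M).le_bot ⟨hxM, x.2⟩))

end Normal

theorem unitary_countable_spectrum_pure_point_general {H : Type*} [NormedAddCommGroup H]
    [InnerProductSpace ℂ H] [CompleteSpace H]
    (U : H →L[ℂ] H) (hU : (U.adjoint * U = 1) ∧ (U * U.adjoint = 1))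
    (hspec : (spectrum ℂ U).Countable) :
    (⨆ μ : ℂ, Module.End.eigenspace (U : H →ₗ[ℂ] H) μ).topologicalClosure = ⊤ := by
  have : IsStarNormal U := isStarNormal_of_mem_unitary (Unitary.mem_iff.mpr hU)
  exact IsStarNormal.topologicalClosure_iSup_eigenspace_eq_top hspec

/-- A unitary operator on a separable Hilbert space whose spectrum is countable has
pure point spectrum: the closed span of its eigenspaces is the whole space. -/
theorem unitary_countable_spectrum_pure_point {H : Type*} [NormedAddCommGroup H]
    [InnerProductSpace ℂ H] [CompleteSpace H] [TopologicalSpace.SeparableSpace H]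
    (U : H →L[ℂ] H) (hU : (U.adjoint * U = 1) ∧ (U * U.adjoint = 1))
    (hspec : (spectrum ℂ U).Countable) :
    (⨆ μ : ℂ, Module.End.eigenspace (U : H →ₗ[ℂ] H) μ).topologicalClosure = ⊤ :=
  unitary_countable_spectrum_pure_point_general U hU hspec
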